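/- arXiv:1108.5832 — 3 statements merged into one kernel-verified Lean document; each statement's English description precedes it below -/
import Mathlib

section
/- For fractional power series f_n with ord(f_n) > 0 and ord(f_n) → ∞, the logarithmic derivative of the infinite product satisfies x·(∏_{n≥1}(1+f_n))' / ∏_{n≥1}(1+f_n) = Σ_{n≥1} x f_n' · (1+f_n)^{-1}. -/
noncomputable section

/-- The lattice Λ associated to `(b; θ₁,…,θₘ)`. -/
def lattice {m : ℕ} (b : ℕ) (θ : Fin m → ℝ) : Set ℝ :=
  {x | ∃ F : MvPolynomial (Fin m) ℕ,
    x = (b : ℝ)⁻¹ * MvPolynomial.eval₂ (Nat.castRingHom ℝ) θ F}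

/-- Multiplication (convolution) of fractional power series, encoded by their
coefficient functions `ℝ → ℂ`. -/
def fmul (f g : ℝ → ℂ) : ℝ → ℂ := fun lam => ∑ᶠ mu : ℝ, f mu * g (lam - mu)

/-- The unit element `1 = x⁰`. -/
def fone : ℝ → ℂ := fun lam => if lam = 0 then 1 else 0

/-- The derivative operator `f ↦ x f'`. -/
def fderiv' (f : ℝ → ℂ) : ℝ → ℂ := fun lam => (lam : ℂ) * f lam

/-- Partial products `∏_{n < N} (1 + f n)`. -/
def partialProd (f : ℕ → ℝ → ℂ) : ℕ → ℝ → ℂ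
  | 0 => fone
  | N + 1 => fmul (partialProd f N) (fone + f N)

/-!
Fix an exponent `x`. Since the lattice meets every half-line `(-∞, x]` in a finite set, and the
coefficients of a product up to `x` only involve coefficients of the factors up to `x`, a single
`N` makes `∏_{n<N} (1 + f n)` agree with `P` up to `x` and `f n` vanish up to `x` for `n ≥ N`.
Inverses then agree up to `x` too, so the coefficient at `x` of `x P' / P` is that of the
logarithmic derivative of a finite product, a finite sum by the Leibniz rule.
-/

open Function Set Filter

namespace AddSubmonoid

theorem eq_zero_or_exists_add_of_mem_closure {M : Type*} [AddMonoid M] {G : Set M} {x : M}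
    (hx : x ∈ closure G) : x = 0 ∨ ∃ g ∈ G, ∃ s ∈ closure G, x = g + s := by
  induction hx using closure_induction with
  | mem g hg => exact Or.inr ⟨g, hg, 0, zero_mem _, (add_zero g).symm⟩
  | zero => exact Or.inl rfl
  | add x y _ hy hx' hy' =>
    rcases hx' with rfl | ⟨g, hg, s, hs, rfl⟩
    · simpa using hy'
    · exact Or.inr ⟨g, hg, s + y, add_mem hs hy, add_assoc g s y⟩

theorem closure_subset_Ici {G : Set ℝ} (hG : G ⊆ Ici 0) : (closure G : Set ℝ) ⊆ Ici 0 :=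
  fun _ hx => closure_induction (fun _ hg => hG hg) (mem_Ici.2 le_rfl)
    (fun _ _ _ _ hx hy => mem_Ici.2 (add_nonneg hx hy)) hx

theorem finite_closure_inter_Iic {G : Set ℝ} (hG : G ⊆ Ici 1)
    (hfin : ∀ M, (G ∩ Iic M).Finite) (M : ℝ) : ((closure G : Set ℝ) ∩ Iic M).Finite := by
  have hnonneg := closure_subset_Ici (hG.trans (Ici_subset_Ici.2 zero_le_one))
  suffices h : ∀ n : ℕ, ((closure G : Set ℝ) ∩ Iic (n : ℝ)).Finite from
    (h ⌈M⌉₊).subset (inter_subset_inter_right _ (Iic_subset_Iic.2 (Nat.le_ceil M)))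
  intro n
  induction n with
  | zero =>
    refine (finite_singleton 0).subset fun x ⟨hx, hx0⟩ => ?_
    exact le_antisymm (by simpa using hx0) (hnonneg hx)
  | succ n ih =>
    -- peeling a generator `g ≥ 1` off an element `≤ n + 1` leaves an element `≤ n`
    refine ((finite_singleton 0).union
      ((hfin (n + 1)).biUnion fun g _ => ih.image (g + ·))).subset ?_
    rintro x ⟨hx, hxn⟩
    rcases eq_zero_or_exists_add_of_mem_closure hx with rfl | ⟨g, hg, s, hs, rfl⟩
    · exact Or.inl rfl
    · have hg1 : 1 ≤ g := hG hg
      have hs0 : 0 ≤ s := hnonneg hs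
      simp only [mem_Iic, Nat.cast_succ] at hxn
      exact Or.inr (mem_biUnion ⟨hg, by simp only [mem_Iic]; linarith⟩
        ⟨s, ⟨hs, by simp only [mem_Iic]; linarith⟩, rfl⟩)

end AddSubmonoid

section Lattice

variable {m : ℕ} {θ : Fin m → ℝ}

def monomialValues (θ : Fin m → ℝ) : Set ℝ := range fun d : Fin m → ℕ => ∏ i, θ i ^ d i

theorem monomialValues_subset_Ici (hθ : ∀ i, 1 < θ i) : monomialValues θ ⊆ Ici 1 := by
  rintro _ ⟨d, rfl⟩
  exact Finset.one_le_prod fun i _ => one_le_pow₀ (hθ i).le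

theorem finite_monomialValues_inter_Iic (hθ : ∀ i, 1 < θ i) (M : ℝ) :
    (monomialValues θ ∩ Iic M).Finite := by
  choose K hK using fun i => pow_unbounded_of_one_lt M (hθ i)
  refine ((finite_Iic K).image fun d => ∏ i, θ i ^ d i).subset ?_
  rintro _ ⟨⟨d, rfl⟩, hdM⟩
  refine ⟨d, fun i => ?_, rfl⟩
  have hle : θ i ^ d i ≤ ∏ j, θ j ^ d j := by
    simpa using Finset.prod_le_prod_of_subset_of_one_le (Finset.subset_univ {i})
      (fun j _ => pow_nonneg (zero_le_one.trans (hθ j).le) _)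
      (fun j _ _ => one_le_pow₀ (hθ j).le)
  exact ((pow_lt_pow_iff_right₀ (hθ i)).1 ((hle.trans hdM).trans_lt (hK i))).le

theorem eval₂_mem_closure_monomialValues (θ : Fin m → ℝ) (F : MvPolynomial (Fin m) ℕ) :
    MvPolynomial.eval₂ (Nat.castRingHom ℝ) θ F ∈ AddSubmonoid.closure (monomialValues θ) := by
  rw [MvPolynomial.eval₂_eq']
  refine sum_mem fun d _ => ?_
  simpa [nsmul_eq_mul] using
    nsmul_mem (AddSubmonoid.subset_closure ⟨⇑d, rfl⟩ : _ ∈ AddSubmonoid.closure (monomialValues θ))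
      (F.coeff d)

end Lattice

/-- The exponent sets on which `fmul` is a finite sum and an associative product. -/
structure IsExponentMonoid (L : Set ℝ) : Prop where
  zero_mem : (0 : ℝ) ∈ L
  add_mem : ∀ ⦃a c : ℝ⦄, a ∈ L → c ∈ L → a + c ∈ L
  subset_Ici : L ⊆ Ici 0
  finite_Iic : ∀ M : ℝ, (L ∩ Iic M).Finite

theorem isExponentMonoid_lattice {m : ℕ} (b : ℕ) (hb : 0 < b) (θ : Fin m → ℝ)
    (hθ : ∀ i, 1 < θ i) : IsExponentMonoid (lattice b θ) where
  zero_mem := ⟨0, by simp⟩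
  add_mem := by
    rintro _ _ ⟨F, rfl⟩ ⟨F', rfl⟩
    exact ⟨F + F', by rw [MvPolynomial.eval₂_add, mul_add]⟩
  subset_Ici := by
    rintro _ ⟨F, rfl⟩
    have hF : 0 ≤ MvPolynomial.eval₂ (Nat.castRingHom ℝ) θ F := AddSubmonoid.closure_subset_Ici
      ((monomialValues_subset_Ici hθ).trans (Ici_subset_Ici.2 zero_le_one))
      (eval₂_mem_closure_monomialValues θ F)
    exact mul_nonneg (inv_nonneg.2 b.cast_nonneg) hF
  finite_Iic M := by
    refine ((AddSubmonoid.finite_closure_inter_Iic (monomialValues_subset_Ici hθ)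
      (finite_monomialValues_inter_Iic hθ) (b * M)).image ((b : ℝ)⁻¹ * ·)).subset ?_
    rintro _ ⟨⟨F, rfl⟩, hFM⟩
    exact ⟨_, ⟨eval₂_mem_closure_monomialValues θ F,
      (inv_mul_le_iff₀ (Nat.cast_pos.2 hb)).1 (mem_Iic.1 hFM)⟩, rfl⟩

theorem fmul_comm (f g : ℝ → ℂ) : fmul f g = fmul g f := by
  funext x
  rw [fmul, fmul, ← finsum_comp_equiv (Equiv.subLeft x)]
  exact finsum_congr fun y => by simp [mul_comm]

theorem fone_fmul (f : ℝ → ℂ) : fmul fone f = f := by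
  funext x
  rw [fmul, finsum_eq_single _ 0 fun y hy => by simp [fone, hy]]
  simp [fone]

theorem fmul_fone (f : ℝ → ℂ) : fmul f fone = f := by
  rw [fmul_comm, fone_fmul]

theorem zero_fmul (g : ℝ → ℂ) : fmul 0 g = 0 := by
  funext x
  simp [fmul]

theorem fderiv'_add (f g : ℝ → ℂ) : fderiv' (f + g) = fderiv' f + fderiv' g := by
  funext x
  simp [fderiv', mul_add]

theorem fderiv'_fone : fderiv' fone = 0 := by
  funext x
  by_cases hx : x = 0 <;> simp [fderiv', fone, hx]

theorem fderiv'_fone_add (f : ℝ → ℂ) : fderiv' (fone + f) = fderiv' f := by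
  rw [fderiv'_add, fderiv'_fone, zero_add]

theorem support_fderiv'_subset (f : ℝ → ℂ) : support (fderiv' f) ⊆ support f :=
  support_mul_subset_right _ _

theorem fderiv'_eqOn {f f' : ℝ → ℂ} {s : Set ℝ} (h : EqOn f f' s) :
    EqOn (fderiv' f) (fderiv' f') s :=
  fun x hx => by simp only [fderiv', h hx]

theorem fmul_eqOn_Iic {f f' g g' : ℝ → ℂ} {c : ℝ}
    (hf : support f ⊆ Ici 0) (hf' : support f' ⊆ Ici 0)
    (hg : support g ⊆ Ici 0) (hg' : support g' ⊆ Ici 0)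
    (hff' : EqOn f f' (Iic c)) (hgg' : EqOn g g' (Iic c)) :
    EqOn (fmul f g) (fmul f' g') (Iic c) := by
  intro x hx
  refine finsum_congr fun y => ?_
  rcases lt_or_ge y 0 with hy | hy
  · rw [notMem_support.1 fun h => (hf h).not_gt hy, notMem_support.1 fun h => (hf' h).not_gt hy,
      zero_mul, zero_mul]
  rcases lt_or_ge (x - y) 0 with hxy | hxy
  · rw [notMem_support.1 fun h => (hg h).not_gt hxy, notMem_support.1 fun h => (hg' h).not_gt hxy,
      mul_zero, mul_zero]
  have hxc : x ≤ c := hx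
  rw [hff' (show y ≤ c by linarith), hgg' (show x - y ≤ c by linarith)]

theorem fmul_eqOn_zero_Iic {f g : ℝ → ℂ} {c : ℝ} (hg : support g ⊆ Ici 0)
    (hf : EqOn f 0 (Iic c)) : EqOn (fmul f g) 0 (Iic c) := by
  intro x hx
  refine finsum_eq_zero_of_forall_eq_zero fun y => ?_
  rcases le_or_gt y x with hyx | hxy
  · rw [hf (le_trans hyx hx), Pi.zero_apply, zero_mul]
  · rw [notMem_support.1 fun h => (hg h).not_gt (sub_neg.2 hxy), mul_zero]

namespace IsExponentMonoid

variable {L : Set ℝ} {f f₁ f₂ g h : ℝ → ℂ}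

theorem support_fone_subset (hL : IsExponentMonoid L) : support fone ⊆ L := fun x hx => by
  by_cases h : x = 0
  · exact h ▸ hL.zero_mem
  · simp [fone, h] at hx

theorem support_fmul_subset (hL : IsExponentMonoid L) (hf : support f ⊆ L) (hg : support g ⊆ L) :
    support (fmul f g) ⊆ L := by
  intro x hx
  by_contra hxL
  refine hx (finsum_eq_zero_of_forall_eq_zero fun y => ?_)
  by_contra hy
  obtain ⟨hfy, hgy⟩ := mul_ne_zero_iff.1 hy
  exact hxL (by simpa using hL.add_mem (hf hfy) (hg hgy))

theorem fmul_eq_sum (hL : IsExponentMonoid L) (hf : support f ⊆ L) (hg : support g ⊆ L)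
    {x : ℝ} {T : Finset ℝ} (hT : L ∩ Iic x ⊆ T) : fmul f g x = ∑ y ∈ T, f y * g (x - y) := by
  refine finsum_eq_sum_of_support_subset _ fun y hy => hT ⟨hf (left_ne_zero_of_mul hy), ?_⟩
  have : 0 ≤ x - y := hL.subset_Ici (hg (right_ne_zero_of_mul hy))
  exact mem_Iic.2 (by linarith)

theorem subset_toFinset_Iic (hL : IsExponentMonoid L) (x : ℝ) :
    L ∩ Iic x ⊆ (hL.finite_Iic x).toFinset :=
  (Finite.coe_toFinset _).ge

theorem add_fmul (hL : IsExponentMonoid L) (hf₁ : support f₁ ⊆ L) (hf₂ : support f₂ ⊆ L)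
    (hg : support g ⊆ L) : fmul (f₁ + f₂) g = fmul f₁ g + fmul f₂ g := by
  funext x
  have hT := hL.subset_toFinset_Iic x
  rw [Pi.add_apply,
    hL.fmul_eq_sum (f := f₁ + f₂) ((support_add _ _).trans (union_subset hf₁ hf₂)) hg hT,
    hL.fmul_eq_sum hf₁ hg hT, hL.fmul_eq_sum hf₂ hg hT, ← Finset.sum_add_distrib]
  simp only [Pi.add_apply, add_mul]

theorem fderiv'_fmul (hL : IsExponentMonoid L) (hf : support f ⊆ L) (hg : support g ⊆ L) :
    fderiv' (fmul f g) = fmul (fderiv' f) g + fmul f (fderiv' g) := by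
  funext x
  have hT := hL.subset_toFinset_Iic x
  rw [Pi.add_apply, fderiv', hL.fmul_eq_sum hf hg hT, Finset.mul_sum,
    hL.fmul_eq_sum ((support_fderiv'_subset f).trans hf) hg hT,
    hL.fmul_eq_sum hf ((support_fderiv'_subset g).trans hg) hT, ← Finset.sum_add_distrib]
  refine Finset.sum_congr rfl fun y _ => ?_
  simp only [fderiv', Complex.ofReal_sub]
  ring

theorem fmul_assoc (hL : IsExponentMonoid L) (hf : support f ⊆ L) (hg : support g ⊆ L)
    (hh : support h ⊆ L) : fmul (fmul f g) h = fmul f (fmul g h) := by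
  funext x
  set T := (hL.finite_Iic x).toFinset
  have hT : L ∩ Iic x ⊆ T := hL.subset_toFinset_Iic x
  have hmemT : ∀ y ∈ T, y ∈ L ∧ y ≤ x := fun y hy => (hL.finite_Iic x).mem_toFinset.1 hy
  have hinner : ∀ z ∈ T, fmul f g z = ∑ y ∈ T, f y * g (z - y) := fun z hz =>
    hL.fmul_eq_sum hf hg fun y hy => hT ⟨hy.1, hy.2.trans (hmemT z hz).2⟩
  -- after the substitution `z = y + w` the inner sum runs over the same window `T`
  have hshift : ∀ y ∈ T, fmul g h (x - y) = ∑ z ∈ T, g (z - y) * h (x - z) := by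
    intro y hy
    rw [fmul, ← finsum_comp_equiv (Equiv.subRight y)]
    simp only [Equiv.subRight_apply, sub_sub_sub_cancel_right]
    refine finsum_eq_sum_of_support_subset _ fun z hz => hT ⟨?_, ?_⟩
    · simpa using hL.add_mem (hmemT y hy).1 (hg (left_ne_zero_of_mul hz))
    · have : 0 ≤ x - z := hL.subset_Ici (hh (right_ne_zero_of_mul hz))
      exact mem_Iic.2 (by linarith)
  calc fmul (fmul f g) h x
      = ∑ z ∈ T, (∑ y ∈ T, f y * g (z - y)) * h (x - z) := by
        rw [hL.fmul_eq_sum (hL.support_fmul_subset hf hg) hh hT]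
        exact Finset.sum_congr rfl fun z hz => by rw [hinner z hz]
    _ = ∑ y ∈ T, f y * ∑ z ∈ T, g (z - y) * h (x - z) := by
        simp only [Finset.sum_mul, Finset.mul_sum, mul_assoc]
        exact Finset.sum_comm
    _ = fmul f (fmul g h) x := by
        rw [hL.fmul_eq_sum hf (hL.support_fmul_subset hg hh) hT]
        exact Finset.sum_congr rfl fun y hy => by rw [hshift y hy]

theorem fmul_fmul_fmul_comm {a b c d : ℝ → ℂ} (hL : IsExponentMonoid L) (ha : support a ⊆ L)
    (hb : support b ⊆ L) (hc : support c ⊆ L) (hd : support d ⊆ L) :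
    fmul (fmul a b) (fmul c d) = fmul (fmul a c) (fmul b d) := by
  rw [hL.fmul_assoc ha hb (hL.support_fmul_subset hc hd), ← hL.fmul_assoc hb hc hd,
    fmul_comm b c, hL.fmul_assoc hc hb hd, ← hL.fmul_assoc ha hc (hL.support_fmul_subset hb hd)]

theorem eqOn_Iic_of_fmul_eq_fone {A A' B B' : ℝ → ℂ} (hL : IsExponentMonoid L)
    (hA : support A ⊆ L) (hA' : support A' ⊆ L) (hB : support B ⊆ L) (hB' : support B' ⊆ L)
    (hAB : fmul A B = fone) (hAB' : fmul A' B' = fone) {c : ℝ} (hAA' : EqOn A A' (Iic c)) :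
    EqOn B B' (Iic c) := by
  have hnn : ∀ {u : ℝ → ℂ}, support u ⊆ L → support u ⊆ Ici 0 := fun hu => hu.trans hL.subset_Ici
  have hB_eq : fmul (fmul B A') B' = B := by rw [hL.fmul_assoc hB hA' hB', hAB', fmul_fone]
  have hB'_eq : fmul (fmul B A) B' = B' := by rw [fmul_comm B A, hAB, fone_fmul]
  have key := fmul_eqOn_Iic (hnn (hL.support_fmul_subset hB hA'))
    (hnn (hL.support_fmul_subset hB hA)) (hnn hB') (hnn hB')
    (fmul_eqOn_Iic (hnn hB) (hnn hB) (hnn hA') (hnn hA) (eqOn_refl _ _) hAA'.symm)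
    (eqOn_refl _ _)
  rwa [hB_eq, hB'_eq] at key

theorem eventually_eqOn_Iic {ι : Type*} {l : Filter ι} {F : ι → ℝ → ℂ} {P : ℝ → ℂ}
    (hL : IsExponentMonoid L) (hF : ∀ i, support (F i) ⊆ L) (hP : support P ⊆ L)
    (hlim : ∀ x, ∀ᶠ i in l, F i x = P x) (c : ℝ) : ∀ᶠ i in l, EqOn (F i) P (Iic c) := by
  filter_upwards [(hL.finite_Iic c).eventually_all.2 fun x _ => hlim x] with i hi x hx
  by_cases hxL : x ∈ L
  · exact hi x ⟨hxL, hx⟩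
  · rw [notMem_support.1 fun h => hxL (hF i h), notMem_support.1 fun h => hxL (hP h)]

end IsExponentMonoid

def seriesProd (u : ℕ → ℝ → ℂ) : ℕ → ℝ → ℂ
  | 0 => fone
  | N + 1 => fmul (seriesProd u N) (u N)

theorem partialProd_eq_seriesProd (f : ℕ → ℝ → ℂ) (N : ℕ) :
    partialProd f N = seriesProd (fun n => fone + f n) N := by
  induction N with
  | zero => rfl
  | succ N ih => rw [partialProd, seriesProd, ih]

section SeriesProd

variable {L : Set ℝ} {u v : ℕ → ℝ → ℂ}

theorem IsExponentMonoid.support_seriesProd_subset (hL : IsExponentMonoid L)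
    (hu : ∀ n, support (u n) ⊆ L) (N : ℕ) : support (seriesProd u N) ⊆ L := by
  induction N with
  | zero => exact hL.support_fone_subset
  | succ N ih => exact hL.support_fmul_subset ih (hu N)

theorem IsExponentMonoid.seriesProd_fmul_seriesProd (hL : IsExponentMonoid L)
    (hu : ∀ n, support (u n) ⊆ L) (hv : ∀ n, support (v n) ⊆ L)
    (huv : ∀ n, fmul (u n) (v n) = fone) (N : ℕ) :
    fmul (seriesProd u N) (seriesProd v N) = fone := by
  induction N with
  | zero => exact fone_fmul fone
  | succ N ih =>
    rw [seriesProd, seriesProd, hL.fmul_fmul_fmul_comm (hL.support_seriesProd_subset hu N) (hu N)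
      (hL.support_seriesProd_subset hv N) (hv N), ih, huv, fone_fmul]

theorem IsExponentMonoid.logDeriv_seriesProd (hL : IsExponentMonoid L)
    (hu : ∀ n, support (u n) ⊆ L) (hv : ∀ n, support (v n) ⊆ L)
    (huv : ∀ n, fmul (u n) (v n) = fone) (N : ℕ) :
    fmul (fderiv' (seriesProd u N)) (seriesProd v N)
      = ∑ n ∈ Finset.range N, fmul (fderiv' (u n)) (v n) := by
  induction N with
  | zero => simp [seriesProd, fderiv'_fone, zero_fmul]
  | succ N ih =>
    have hU := hL.support_seriesProd_subset hu N
    have hV := hL.support_seriesProd_subset hv N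
    have hU' := (support_fderiv'_subset _).trans hU
    have hu' := (support_fderiv'_subset _).trans (hu N)
    rw [seriesProd, seriesProd, hL.fderiv'_fmul hU (hu N),
      hL.add_fmul (hL.support_fmul_subset hU' (hu N)) (hL.support_fmul_subset hU hu')
        (hL.support_fmul_subset hV (hv N)),
      hL.fmul_fmul_fmul_comm hU' (hu N) hV (hv N), hL.fmul_fmul_fmul_comm hU hu' hV (hv N),
      huv, hL.seriesProd_fmul_seriesProd hu hv huv, fmul_fone, fone_fmul, ih,
      Finset.sum_range_succ]

end SeriesProd

theorem logDeriv_infinite_product_general {m : ℕ} (b : ℕ) (hb : 0 < b)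
    (θ : Fin m → ℝ) (hθ : ∀ i, 1 < θ i)
    (f : ℕ → ℝ → ℂ) (hsupp : ∀ n, Function.support (f n) ⊆ lattice b θ)
    (hordtop : ∀ M : ℝ, ∃ N, ∀ n ≥ N, ∀ lam ≤ M, f n lam = 0)
    (g : ℕ → ℝ → ℂ) (hg : ∀ n, Function.support (g n) ⊆ lattice b θ)
    (hginv : ∀ n, fmul (fone + f n) (g n) = fone)
    (P : ℝ → ℂ) (hP : Function.support P ⊆ lattice b θ)
    (hPlim : ∀ lam : ℝ, ∃ N₀, ∀ N ≥ N₀, partialProd f N lam = P lam)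
    (Q : ℝ → ℂ) (hQ : Function.support Q ⊆ lattice b θ)
    (hQinv : fmul P Q = fone) :
    fmul (fderiv' P) Q = fun lam => ∑ᶠ n : ℕ, fmul (fderiv' (f n)) (g n) lam := by
  have hL := isExponentMonoid_lattice b hb θ hθ
  have hu : ∀ n, support (fone + f n) ⊆ lattice b θ :=
    fun n => (support_add _ _).trans (union_subset hL.support_fone_subset (hsupp n))
  have hU := hL.support_seriesProd_subset hu
  have hG := hL.support_seriesProd_subset hg
  have hnn : ∀ {w : ℝ → ℂ}, support w ⊆ lattice b θ → support w ⊆ Ici 0 :=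
    fun hw => hw.trans hL.subset_Ici
  funext x
  obtain ⟨N, hPN, hfN⟩ : ∃ N, EqOn (seriesProd (fun n => fone + f n) N) P (Iic x) ∧
      ∀ n ≥ N, EqOn (f n) 0 (Iic x) := by
    obtain ⟨N₁, hN₁⟩ := hordtop x
    refine ((hL.eventually_eqOn_Iic hU hP (fun y => ?_) x).and
      (eventually_ge_atTop N₁)).exists.imp fun N hN => ⟨hN.1, fun n hn y hy => ?_⟩
    · simpa [eventually_atTop, partialProd_eq_seriesProd] using hPlim y
    · exact hN₁ n (hN.2.trans hn) y hy
  have hQN : EqOn Q (seriesProd g N) (Iic x) := hL.eqOn_Iic_of_fmul_eq_fone hP (hU N) hQ (hG N)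
    hQinv (hL.seriesProd_fmul_seriesProd hu hg hginv N) hPN.symm
  have htail : support (fun n => fmul (fderiv' (f n)) (g n) x) ⊆ Finset.range N := by
    intro n hn
    by_contra hnN
    have hfn := hfN n (by simpa using hnN)
    exact hn (fmul_eqOn_zero_Iic (hnn (hg n)) (fun y hy => by simp [fderiv', hfn hy]) self_mem_Iic)
  rw [fmul_eqOn_Iic (hnn (support_fderiv'_subset P |>.trans hP))
      (hnn ((support_fderiv'_subset _).trans (hU N))) (hnn hQ) (hnn (hG N))
      (fderiv'_eqOn hPN.symm) hQN self_mem_Iic,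
    hL.logDeriv_seriesProd hu hg hginv, finsum_eq_sum_of_support_subset _ htail, Finset.sum_apply]
  simp only [fderiv'_fone_add]

/-- Logarithmic derivative of an infinite product:
`x (∏ₙ (1+fₙ))' / ∏ₙ (1+fₙ) = Σₙ x fₙ' (1+fₙ)⁻¹`,
where `ord fₙ > 0` and `ord fₙ → ∞`.  The infinite product `P` is the limit of
the partial products (coefficientwise stabilization, which is convergence in
the valuation metric), `Q = P⁻¹`, and `g n = (1 + f n)⁻¹`. -/
theorem logDeriv_infinite_product {m : ℕ} (b : ℕ) (hb : 0 < b)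
    (θ : Fin m → ℝ) (hθ : ∀ i, 1 < θ i)
    (f : ℕ → ℝ → ℂ) (hsupp : ∀ n, Function.support (f n) ⊆ lattice b θ)
    (hord : ∀ n, ∀ lam ≤ (0 : ℝ), f n lam = 0)
    (hordtop : ∀ M : ℝ, ∃ N, ∀ n ≥ N, ∀ lam ≤ M, f n lam = 0)
    (g : ℕ → ℝ → ℂ) (hg : ∀ n, Function.support (g n) ⊆ lattice b θ)
    (hginv : ∀ n, fmul (fone + f n) (g n) = fone)
    (P : ℝ → ℂ) (hP : Function.support P ⊆ lattice b θ)
    (hPlim : ∀ lam : ℝ, ∃ N₀, ∀ N ≥ N₀, partialProd f N lam = P lam)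
    (Q : ℝ → ℂ) (hQ : Function.support Q ⊆ lattice b θ)
    (hQinv : fmul P Q = fone) :
    fmul (fderiv' P) Q = fun lam => ∑ᶠ n : ℕ, fmul (fderiv' (f n)) (g n) lam :=
  logDeriv_infinite_product_general b hb θ hθ f hsupp hordtop g hg hginv P hP hPlim Q hQ hQinv
end
end

section
/- With the normalization Φ_n(0) = 1, the degree identity holds: Σ_{f : d⟨a|d⟩ ∣ f ∣ ad} φ(f) = a·φ(d), where φ is Euler's totient and ⟨a|d⟩ = ∏_{p|gcd(a,d)} p^{ord_p(a)}. -/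
/-!
Write `a = ⟨a|d⟩ · c`. Then `a d = m c` with `m = d ⟨a|d⟩`, and `m` is coprime to `c`: the
primes of `⟨a|d⟩` divide `d`, and a prime dividing both `d` and `a` has been removed from `a`
to its full multiplicity. Hence the `f` in the sum are exactly the `m g` with `g ∣ c`, so the
sum is `φ(m) Σ_{g ∣ c} φ(g) = φ(m) c`, and `φ(m) = ⟨a|d⟩ φ(d)` because every prime of
`⟨a|d⟩` already divides `d`.
-/

/-- `⟨a|d⟩ = ∏_{p ∣ gcd(a,d)} p^{ord_p(a)}`. -/
def bracket (a d : ℕ) : ℕ :=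
  ∏ p ∈ (Nat.gcd a d).primeFactors, p ^ (a.factorization p)

namespace Nat

theorem totient_mul_of_forall_prime_dvd {m n : ℕ} (h : ∀ p, p.Prime → p ∣ m → p ∣ n) :
    φ (m * n) = m * φ n := by
  rcases eq_or_ne m 0 with rfl | hm
  · simp
  rcases eq_or_ne n 0 with rfl | hn
  · simp
  have hprimes : (m * n).primeFactors = n.primeFactors := by
    rw [primeFactors_mul hm hn, Finset.union_eq_right]
    intro p hp
    have hp' := prime_of_mem_primeFactors hp
    exact mem_primeFactors.mpr ⟨hp', h p hp' (dvd_of_mem_primeFactors hp), hn⟩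
  rw [totient_eq_div_primeFactors_mul, totient_eq_div_primeFactors_mul n, hprimes,
    Nat.mul_div_assoc m (prod_primeFactors_dvd n), mul_assoc]

theorem sum_totient_filter_dvd_of_coprime {m c : ℕ} (h : m.Coprime c) :
    ∑ f ∈ (m * c).divisors with m ∣ f, φ f = φ m * c := by
  rcases eq_or_ne m 0 with rfl | hm
  · simp
  have hmultiples : {f ∈ (m * c).divisors | m ∣ f} = c.divisors.image (m * ·) := by
    ext f
    simp only [Finset.mem_filter, mem_divisors, Finset.mem_image]
    constructor
    · rintro ⟨⟨hf, hmc⟩, g, rfl⟩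
      exact ⟨g, ⟨(mul_dvd_mul_iff_left hm).mp hf, right_ne_zero_of_mul hmc⟩, rfl⟩
    · rintro ⟨g, ⟨hg, hc⟩, rfl⟩
      exact ⟨⟨mul_dvd_mul_left m hg, mul_ne_zero hm hc⟩, dvd_mul_right m g⟩
  rw [hmultiples, Finset.sum_image (mul_right_injective₀ hm).injOn,
    Finset.sum_congr rfl fun g hg => totient_mul (h.coprime_dvd_right (dvd_of_mem_divisors hg)),
    ← Finset.mul_sum, sum_totient]

end Nat

theorem factorization_bracket (a d p : ℕ) :
    (bracket a d).factorization p =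
      if p ∈ (Nat.gcd a d).primeFactors then a.factorization p else 0 := by
  rw [bracket,
    Nat.factorization_prod fun q hq => pow_ne_zero _ (Nat.pos_of_mem_primeFactors hq).ne',
    Finset.sum_apply', Finset.sum_congr rfl fun q hq => by
      rw [(Nat.prime_of_mem_primeFactors hq).factorization_pow, Finsupp.single_apply]]
  simp

theorem bracket_dvd_self (a d : ℕ) : bracket a d ∣ a := by
  rcases eq_or_ne a 0 with rfl | ha
  · exact dvd_zero _
  conv_rhs => rw [← Nat.prod_factorization_pow_eq_self ha]
  exact Finset.prod_dvd_prod_of_subset _ _ _ (Nat.primeFactors_mono (Nat.gcd_dvd_left a d) ha)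

theorem mem_primeFactors_gcd_of_prime_dvd_bracket {a d p : ℕ} (hp : p.Prime)
    (h : p ∣ bracket a d) : p ∈ (Nat.gcd a d).primeFactors := by
  obtain ⟨q, hq, hpq⟩ := hp.prime.exists_mem_finset_dvd h
  have hpq : p = q :=
    (Nat.prime_dvd_prime_iff_eq hp (Nat.prime_of_mem_primeFactors hq)).mp (hp.dvd_of_dvd_pow hpq)
  rwa [hpq]

theorem dvd_of_prime_dvd_bracket {a d p : ℕ} (hp : p.Prime) (h : p ∣ bracket a d) : p ∣ d :=
  (Nat.dvd_of_mem_primeFactors (mem_primeFactors_gcd_of_prime_dvd_bracket hp h)).trans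
    (Nat.gcd_dvd_right a d)

theorem factorization_div_bracket_of_mem {a d p : ℕ} (hp : p ∈ (Nat.gcd a d).primeFactors) :
    (a / bracket a d).factorization p = 0 := by
  rw [Nat.factorization_div (bracket_dvd_self a d), Finsupp.tsub_apply, factorization_bracket,
    if_pos hp, Nat.sub_self]

theorem coprime_mul_bracket_div_bracket {a : ℕ} (d : ℕ) (ha : a ≠ 0) :
    (d * bracket a d).Coprime (a / bracket a d) := by
  have hc : a / bracket a d ≠ 0 :=
    right_ne_zero_of_mul ((Nat.mul_div_cancel' (bracket_dvd_self a d)).symm ▸ ha)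
  refine Nat.coprime_of_dvd fun p hp hpm hpc => ?_
  have hpd : p ∣ d := by
    rcases hp.dvd_mul.mp hpm with hpd | hpb
    · exact hpd
    · exact dvd_of_prime_dvd_bracket hp hpb
  have hpa : p ∣ a := hpc.trans (Nat.div_dvd_of_dvd (bracket_dvd_self a d))
  have hmem : p ∈ (Nat.gcd a d).primeFactors :=
    Nat.mem_primeFactors.mpr ⟨hp, Nat.dvd_gcd hpa hpd, Nat.gcd_ne_zero_left ha⟩
  exact (hp.factorization_pos_of_dvd hc hpc).ne' (factorization_div_bracket_of_mem hmem)

theorem totient_sum_identity_general (a d : ℕ) (ha : 0 < a) :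
    ∑ f ∈ (a * d).divisors.filter (fun f => d * bracket a d ∣ f),
      Nat.totient f = a * Nat.totient d := by
  have hbc : bracket a d * (a / bracket a d) = a := Nat.mul_div_cancel' (bracket_dvd_self a d)
  have hsplit : a * d = d * bracket a d * (a / bracket a d) := by
    rw [mul_assoc, hbc, mul_comm]
  rw [hsplit, Nat.sum_totient_filter_dvd_of_coprime (coprime_mul_bracket_div_bracket d ha.ne'),
    mul_comm d,
    Nat.totient_mul_of_forall_prime_dvd fun _ => dvd_of_prime_dvd_bracket, mul_right_comm, hbc]

/-- Degree identity: `Σ_{f : d⟨a|d⟩ ∣ f ∣ ad} φ(f) = a·φ(d)`. -/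
theorem totient_sum_identity (a d : ℕ) (ha : 0 < a) (hd : 0 < d) :
    ∑ f ∈ (a * d).divisors.filter (fun f => d * bracket a d ∣ f),
      Nat.totient f = a * Nat.totient d :=
  totient_sum_identity_general a d ha
end

section
/- Let g(x) = ∏_{d∈ℕ} Φ_d(x)^{h_d} with h_d ∈ ℚ and h_d = 0 for all large d, and let a be a positive integer. Then g(x^a) = ∏_{f∈ℕ} Φ_f(x)^{h_{[f/a]}}, where for a positive rational y, [y] = ∏_{ord_p(y)>0} p^{ord_p(y)}. -/
noncomputable section

open Polynomial

/-- The cyclotomic polynomial of order `n`, normalized so that `Φ_n(0) = 1`. -/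
def Phi (n : ℕ) : Polynomial ℂ :=
  ∏ ζ ∈ primitiveRoots n ℂ, (1 - Polynomial.C ζ * Polynomial.X)

/-- The generalized binomial coefficient `C(μ, k)` for `μ ∈ ℂ`. -/
def cchoose (μ : ℂ) (k : ℕ) : ℂ :=
  (∏ i ∈ Finset.range k, (μ - (i : ℂ))) / (k.factorial : ℂ)

/-- `F^μ` for a power series `F` with constant term `1` and `μ ∈ ℂ`, defined
by the binomial series `Σ_k C(μ,k) (F−1)^k` (coefficientwise a finite sum). -/
def cpowPS (F : PowerSeries ℂ) (μ : ℂ) : PowerSeries ℂ :=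
  PowerSeries.mk fun j => ∑ᶠ k : ℕ, cchoose μ k * PowerSeries.coeff j ((F - 1) ^ k)

/-- Substitution `x ↦ x^a` on power series. -/
def substPow (a : ℕ) (F : PowerSeries ℂ) : PowerSeries ℂ :=
  PowerSeries.mk fun j => if a ∣ j then PowerSeries.coeff (j / a) F else 0

/-- For a positive rational `y`, `[y] = ∏_{ord_p(y)>0} p^{ord_p(y)}`, i.e. the
numerator of `y` in lowest terms. -/
def numPart (y : ℚ) : ℕ := y.num.toNat

/-!
Substitution `x ↦ x^a` commutes with the binomial powers `F ^ μ`, and `F ↦ F ^ μ` is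
multiplicative on series with constant term `1`: the coefficients of both sides are
polynomials in `μ` that agree on `ℕ`. So the theorem reduces to the polynomial identity
`Φ_d(x^a) = ∏_{[f/a] = d} Φ_f(x)`. It follows from `1 - ζ x^a = ∏_{ω^a = ζ} (1 - ω x)`,
since `ω^a` has order `ord ω / gcd(ord ω, a)`, and `[f/a] = f / gcd(f, a)`.
-/

lemma numPart_natCast_div_natCast {a : ℕ} (ha : a ≠ 0) (f : ℕ) :
    numPart ((f : ℚ) / (a : ℚ)) = f / f.gcd a := by
  have h := Rat.num_mkRat (f : ℤ) a
  rw [Rat.mkRat_eq_div, if_neg ha, Int.cast_natCast] at h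
  rw [numPart, h, Int.natAbs_natCast, Nat.gcd_comm, ← Int.natCast_div, Int.toNat_natCast]

lemma cchoose_natCast (m k : ℕ) : cchoose m k = m.choose k := by
  rw [cchoose, ← descPochhammer_eval_eq_prod_range, descPochhammer_eval_eq_descFactorial,
    Nat.descFactorial_eq_factorial_mul_choose, Nat.cast_mul,
    mul_div_cancel_left₀ _ (Nat.cast_ne_zero.2 k.factorial_ne_zero)]

lemma cchoose_eq_eval (μ : ℂ) (k : ℕ) :
    cchoose μ k = (C (k.factorial : ℂ)⁻¹ * descPochhammer ℂ k).eval μ := by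
  rw [cchoose, eval_mul, eval_C, descPochhammer_eval_eq_prod_range, div_eq_inv_mul]

lemma coeff_sub_one_pow_of_lt {R : Type*} [CommRing R] {F : PowerSeries R}
    (hF : PowerSeries.constantCoeff F = 1) {j k : ℕ} (hjk : j < k) :
    PowerSeries.coeff j ((F - 1) ^ k) = 0 := by
  have hX : PowerSeries.X ∣ F - 1 := PowerSeries.X_dvd_iff.2 (by simp [hF])
  exact PowerSeries.X_pow_dvd_iff.1 (pow_dvd_pow_of_dvd hX k) j hjk

lemma coeff_cpowPS {F : PowerSeries ℂ} (hF : PowerSeries.constantCoeff F = 1) (μ : ℂ)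
    (j : ℕ) :
    PowerSeries.coeff j (cpowPS F μ) =
      ∑ k ∈ Finset.range (j + 1), cchoose μ k * PowerSeries.coeff j ((F - 1) ^ k) := by
  rw [cpowPS, PowerSeries.coeff_mk]
  refine finsum_eq_sum_of_support_subset _ fun k hk => Finset.mem_range.2 ?_
  by_contra hkj
  exact hk (by simp only [coeff_sub_one_pow_of_lt hF (by omega : j < k), mul_zero])

lemma cpowPS_natCast (F : PowerSeries ℂ) (m : ℕ) : cpowPS F m = F ^ m := by
  ext j
  rw [cpowPS, PowerSeries.coeff_mk, ← sub_add_cancel F 1, add_pow, map_sum, add_sub_cancel_right]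
  simp only [cchoose_natCast]
  refine (finsum_eq_sum_of_support_subset _ fun k hk => ?_).trans
    (Finset.sum_congr rfl fun k _ => ?_)
  · by_contra hkm
    simp_all [Nat.choose_eq_zero_of_lt]
  · rw [one_pow, mul_one, ← map_natCast (PowerSeries.C (R := ℂ)), PowerSeries.coeff_mul_C,
      mul_comm]

lemma cpowPS_zero (F : PowerSeries ℂ) : cpowPS F 0 = 1 := by
  simpa using cpowPS_natCast F 0

lemma one_cpowPS (μ : ℂ) : cpowPS 1 μ = 1 := by
  ext j
  rw [coeff_cpowPS (map_one _), Finset.sum_eq_single 0]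
  · simp [cchoose]
  · intro k _ hk
    rw [sub_self, zero_pow hk, map_zero, mul_zero]
  · simp

lemma exists_eval_eq_coeff_cpowPS {F : PowerSeries ℂ} (hF : PowerSeries.constantCoeff F = 1)
    (j : ℕ) : ∃ P : ℂ[X], ∀ μ, P.eval μ = PowerSeries.coeff j (cpowPS F μ) :=
  ⟨∑ k ∈ Finset.range (j + 1),
      C (PowerSeries.coeff j ((F - 1) ^ k)) * (C (k.factorial : ℂ)⁻¹ * descPochhammer ℂ k),
    fun μ => by simp only [coeff_cpowPS hF, eval_finsetSum, eval_mul, eval_C, cchoose_eq_eval,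
      mul_comm]⟩

/-- Both sides have coefficients polynomial in `μ`, and they agree for `μ ∈ ℕ`. -/
lemma cpowPS_mul {F G : PowerSeries ℂ} (hF : PowerSeries.constantCoeff F = 1)
    (hG : PowerSeries.constantCoeff G = 1) (μ : ℂ) :
    cpowPS (F * G) μ = cpowPS F μ * cpowPS G μ := by
  ext j
  choose P hP using exists_eval_eq_coeff_cpowPS hF
  choose Q hQ using exists_eval_eq_coeff_cpowPS hG
  have hFG : PowerSeries.constantCoeff (F * G) = 1 := by simp [hF, hG]
  obtain ⟨R, hR⟩ := exists_eval_eq_coeff_cpowPS hFG j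
  have hRPQ : R = ∑ p ∈ Finset.HasAntidiagonal.antidiagonal j, P p.1 * Q p.2 := by
    refine eq_of_infinite_eval_eq _ _ <|
      Set.infinite_of_injective_forall_mem Nat.cast_injective fun m : ℕ => ?_
    simp [hR, hP, hQ, cpowPS_natCast, mul_pow, PowerSeries.coeff_mul, eval_finsetSum]
  simp [← hR, hRPQ, eval_finsetSum, hP, hQ, PowerSeries.coeff_mul]

lemma cpowPS_prod {ι : Type*} (s : Finset ι) (F : ι → PowerSeries ℂ)
    (hF : ∀ i ∈ s, PowerSeries.constantCoeff (F i) = 1) (μ : ℂ) :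
    cpowPS (∏ i ∈ s, F i) μ = ∏ i ∈ s, cpowPS (F i) μ := by
  classical
  induction s using Finset.induction_on with
  | empty => simpa using one_cpowPS μ
  | insert i s hi ih =>
    rw [Finset.forall_mem_insert] at hF
    rw [Finset.prod_insert hi, Finset.prod_insert hi, ← ih hF.2,
      cpowPS_mul hF.1 (by simp [map_prod, Finset.prod_eq_one hF.2])]

lemma expand_cpowPS {a : ℕ} (ha : a ≠ 0) (F : PowerSeries ℂ) (μ : ℂ) :
    PowerSeries.expand a ha (cpowPS F μ) = cpowPS (PowerSeries.expand a ha F) μ := by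
  ext j
  have hsub : PowerSeries.expand a ha F - 1 = PowerSeries.expand a ha (F - 1) := by simp
  simp only [cpowPS, PowerSeries.coeff_expand, PowerSeries.coeff_mk, hsub, ← map_pow]
  split_ifs <;> simp

lemma mulSupport_cpowPS_subset {ι : Type*} (F : ι → PowerSeries ℂ) (μ : ι → ℂ) :
    Function.mulSupport (fun i => cpowPS (F i) (μ i)) ⊆ Function.support μ :=
  Function.mulSupport_subset_iff'.2 fun i hi => by
    rw [Function.notMem_support.1 hi, cpowPS_zero]

lemma substPow_eq_expand {a : ℕ} (ha : a ≠ 0) (F : PowerSeries ℂ) :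
    substPow a F = PowerSeries.expand a ha F := by
  ext j
  rw [substPow, PowerSeries.coeff_mk, PowerSeries.coeff_expand]

lemma PowerSeries.expand_coe {R : Type*} [CommRing R] {a : ℕ} (ha : a ≠ 0) (P : R[X]) :
    expand a ha (P : PowerSeries R) = (Polynomial.expand R a P : PowerSeries R) := by
  ext j
  rw [coeff_expand, Polynomial.coeff_coe, Polynomial.coeff_coe,
    Polynomial.coeff_expand (Nat.pos_of_ne_zero ha)]

lemma Polynomial.reverse_prod {R ι : Type*} [CommSemiring R] [NoZeroDivisors R] (s : Finset ι)
    (p : ι → R[X]) : (∏ i ∈ s, p i).reverse = ∏ i ∈ s, (p i).reverse := by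
  classical
  induction s using Finset.induction_on with
  | empty => simpa using reverse_C (1 : R)
  | insert i s hi ih => rw [Finset.prod_insert hi, Finset.prod_insert hi, reverse_mul_of_domain, ih]

lemma Polynomial.reverse_X_pow_sub_C {R : Type*} [Ring R] [Nontrivial R] (n : ℕ) (r : R) :
    (X ^ n - C r).reverse = 1 - C r * X ^ n := by
  rw [reverse, natDegree_X_pow_sub_C, reflect_sub, reflect_monomial, reflect_C,
    revAt_le le_rfl, Nat.sub_self, pow_zero]

lemma X_pow_sub_C_eq_prod_nthRootsFinset {a : ℕ} (ha : 0 < a) {ζ : ℂ} (hζ : ζ ≠ 0) :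
    X ^ a - C ζ = ∏ ω ∈ nthRootsFinset a ζ, (X - C ω) := by
  classical
  rw [(IsAlgClosed.splits _).eq_prod_roots_of_monic (monic_X_pow_sub_C ζ ha.ne'),
    nthRootsFinset_def, Finset.prod_eq_multiset_prod, Multiset.toFinset_val,
    ((Complex.isPrimitiveRoot_exp a ha.ne').nthRoots_nodup hζ).dedup]
  rfl

lemma one_sub_C_mul_X_pow_eq_prod {a : ℕ} (ha : 0 < a) {ζ : ℂ} (hζ : ζ ≠ 0) :
    1 - C ζ * X ^ a = ∏ ω ∈ nthRootsFinset a ζ, (1 - C ω * X) := by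
  have hlinear (ω : ℂ) : (X - C ω).reverse = 1 - C ω * X := by
    simpa using reverse_X_pow_sub_C 1 ω
  rw [← reverse_X_pow_sub_C, X_pow_sub_C_eq_prod_nthRootsFinset ha hζ, reverse_prod]
  simp only [hlinear]

/-- The `f` with `[f/a] = d`, see `numPart_natCast_div_natCast`. -/
def divGcdFiber (a d : ℕ) : Finset ℕ :=
  (Finset.range (d * a + 1)).filter fun f => f / f.gcd a = d

lemma mem_divGcdFiber {a d f : ℕ} (ha : 0 < a) : f ∈ divGcdFiber a d ↔ f / f.gcd a = d := by
  refine ⟨fun hf => (Finset.mem_filter.1 hf).2, fun hf => Finset.mem_filter.2 ⟨?_, hf⟩⟩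
  have hle : f ≤ d * a := calc
    f = f / f.gcd a * f.gcd a := (Nat.div_mul_cancel (Nat.gcd_dvd_left f a)).symm
    _ ≤ d * a := hf ▸ Nat.mul_le_mul_left _ (Nat.gcd_le_right _ ha)
  exact Finset.mem_range.2 (Nat.lt_succ_of_le hle)

lemma pairwiseDisjoint_divGcdFiber {a : ℕ} (ha : 0 < a) (s : Set ℕ) :
    s.PairwiseDisjoint (divGcdFiber a) :=
  fun _ _ _ _ hne => Finset.disjoint_left.2 fun _ hf hf' =>
    hne (((mem_divGcdFiber ha).1 hf).symm.trans ((mem_divGcdFiber ha).1 hf'))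

lemma divGcdFiber_zero {a : ℕ} (ha : 0 < a) : divGcdFiber a 0 = {0} := by
  ext f
  rw [mem_divGcdFiber ha, Finset.mem_singleton, Nat.div_eq_zero_iff]
  rcases f.eq_zero_or_pos with rfl | hf
  · simp [ha]
  · have := Nat.gcd_le_left a hf
    simp only [Nat.gcd_eq_zero_iff]
    omega

lemma biUnion_nthRootsFinset_primitiveRoots {R : Type*} [CommRing R] [IsDomain R]
    [DecidableEq R] {a d : ℕ} (ha : 0 < a) (hd : 0 < d) :
    (primitiveRoots d R).biUnion (fun ζ => nthRootsFinset a ζ) =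
      (divGcdFiber a d).biUnion (fun f => primitiveRoots f R) := by
  ext ω
  simp only [Finset.mem_biUnion, mem_nthRootsFinset ha, mem_divGcdFiber ha, exists_eq_right',
    mem_primitiveRoots hd, IsPrimitiveRoot.iff_orderOf, orderOf_pow' ω ha.ne']
  constructor
  · intro hω
    have hpos : 0 < orderOf ω := Nat.pos_of_ne_zero fun h0 => by simp [h0] at hω; omega
    exact ⟨orderOf ω, hω, (mem_primitiveRoots hpos).2 (IsPrimitiveRoot.orderOf ω)⟩
  · rintro ⟨f, hfd, hωf⟩
    have hpos : 0 < f := Nat.pos_of_ne_zero fun h0 => by simp [h0] at hfd; omega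
    rwa [((mem_primitiveRoots hpos).1 hωf).eq_orderOf] at hfd

lemma expand_Phi {a : ℕ} (ha : 0 < a) (d : ℕ) :
    expand ℂ a (Phi d) = ∏ f ∈ divGcdFiber a d, Phi f := by
  classical
  rcases d.eq_zero_or_pos with rfl | hd
  · simp [divGcdFiber_zero ha, Phi]
  have hroots : (primitiveRoots d ℂ : Set ℂ).PairwiseDisjoint fun ζ => nthRootsFinset a ζ :=
    fun ζ _ ζ' _ hne => Finset.disjoint_left.2 fun ω hω hω' =>
      hne (((mem_nthRootsFinset ha _).1 hω).symm.trans ((mem_nthRootsFinset ha _).1 hω'))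
  have horders : (divGcdFiber a d : Set ℕ).PairwiseDisjoint fun f => primitiveRoots f ℂ :=
    fun _ _ _ _ hne => IsPrimitiveRoot.disjoint hne
  calc expand ℂ a (Phi d) = ∏ ζ ∈ primitiveRoots d ℂ, (1 - C ζ * X ^ a) := by
        simp [Phi, map_prod]
    _ = ∏ ζ ∈ primitiveRoots d ℂ, ∏ ω ∈ nthRootsFinset a ζ, (1 - C ω * X) :=
        Finset.prod_congr rfl fun ζ hζ => one_sub_C_mul_X_pow_eq_prod ha
          (((mem_primitiveRoots hd).1 hζ).ne_zero hd.ne')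
    _ = ∏ f ∈ divGcdFiber a d, Phi f := by
        rw [← Finset.prod_biUnion hroots, biUnion_nthRootsFinset_primitiveRoots ha hd,
          Finset.prod_biUnion horders]
        rfl

lemma constantCoeff_Phi (n : ℕ) : PowerSeries.constantCoeff (Phi n : PowerSeries ℂ) = 1 := by
  rw [← PowerSeries.coeff_zero_eq_constantCoeff_apply, coeff_coe, coeff_zero_eq_eval_zero]
  simp [Phi, eval_prod]

lemma powerSeriesExpand_Phi {a : ℕ} (ha : 0 < a) (d : ℕ) :
    PowerSeries.expand a ha.ne' (Phi d : PowerSeries ℂ) =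
      ∏ f ∈ divGcdFiber a d, (Phi f : PowerSeries ℂ) := by
  rw [PowerSeries.expand_coe, expand_Phi ha, ← coeToPowerSeries.ringHom_apply, map_prod]
  rfl

/-- If `g(x) = ∏_d Φ_d(x)^{h_d}` with rational exponents `h_d` vanishing for
large `d`, then `g(x^a) = ∏_f Φ_f(x)^{h_{[f/a]}}`. -/
theorem subst_pow_cyclotomic_product (a : ℕ) (ha : 0 < a) (h : ℕ → ℚ)
    (hfin : {d : ℕ | h d ≠ 0}.Finite) :
    substPow a (∏ᶠ d : ℕ, cpowPS (Phi d : PowerSeries ℂ) ((h d : ℂ))) =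
      ∏ᶠ f : ℕ, cpowPS (Phi f : PowerSeries ℂ)
        ((h (numPart ((f : ℚ) / (a : ℚ))) : ℂ)) := by
  classical
  set T := hfin.toFinset
  have hT : Function.support (fun d => (h d : ℂ)) ⊆ T := fun d => by simp [T]
  have hT' : Function.support (fun f => (h (f / f.gcd a) : ℂ)) ⊆
      T.biUnion (divGcdFiber a) :=
    fun f hf => Finset.mem_biUnion.2 ⟨_, by simpa [T] using hf, (mem_divGcdFiber ha).2 rfl⟩
  simp only [numPart_natCast_div_natCast ha.ne']
  rw [finprod_eq_prod_of_mulSupport_subset _ ((mulSupport_cpowPS_subset _ _).trans hT),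
    finprod_eq_prod_of_mulSupport_subset _ ((mulSupport_cpowPS_subset _ _).trans hT'),
    substPow_eq_expand ha.ne', map_prod, Finset.prod_biUnion (pairwiseDisjoint_divGcdFiber ha _)]
  refine Finset.prod_congr rfl fun d _ => ?_
  rw [expand_cpowPS, powerSeriesExpand_Phi ha, cpowPS_prod _ _ fun f _ => constantCoeff_Phi f]
  exact Finset.prod_congr rfl fun f hf => by rw [(mem_divGcdFiber ha).1 hf]
end
end
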